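/- For all real numbers d_0, d_1 and every integer k ≥ 1: c^{(k)}(d_0, d_1) = Σ_{i=0}^{⌊k/2⌋} C(k, 2i) · Σ_{s=0}^{min{i, k−2i}} C(2i, s+i) · Σ_{m=0}^{⌊(k−2i−s)/2⌋} C(k−2i, s+2m) · C(s+2m, m) · d_0^{2i} · d_1^{k−2i} / 2^{2k−2i+2m+max{0, s−1}}, where C denotes the binomial coefficient. -/

import Mathlib

open Finset

/-- The weights `U_0 = d1/4`, `U_1 = d0/2`, `U_2 = d1/8`. -/
noncomputable def Uwt (d0 d1 : ℝ) : ℕ → ℝ :=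
  fun a => if a = 0 then d1 / 4 else if a = 1 then d0 / 2 else d1 / 8

/-- The weighted closed-path sum `c^{(k)}(d0,d1)`: the sum over all sequences
`γ : Fin k → {-2,-1,0,1,2}` with `∑ γ t = 0` of `∏ t, U_{|γ t|}`. -/
noncomputable def cpath (d0 d1 : ℝ) (k : ℕ) : ℝ :=
  ∑ γ ∈ (Finset.univ : Finset (Fin k → ({-2, -1, 0, 1, 2} : Finset ℤ))).filter
      (fun γ => ∑ t, (γ t : ℤ) = 0),
    ∏ t, Uwt d0 d1 (γ t : ℤ).natAbs

/-!
Shifting every step by `2`, `c^{(k)}` is the coefficient of `X^{2k}` in `P^k`, where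
`P = X^2 ∑_{|g| ≤ 2} U_{|g|} X^g = (1 + X^2) ((d0/2) X + (d1/8) (1 + X^2))`.
Expanding the second factor binomially, only the even powers `((d0/2) X)^{2i}` reach `X^{2k}`, so
`c^{(k)} = ∑_i C(k,2i) C(2k-2i, k-i) (d0/2)^{2i} (d1/8)^{k-2i}`.
With `n = k - 2i`, the inner double sum of the claimed formula equals `C(2i+2n, i+n) / 2^n`: the sum
over `m` is the expansion `(1 + X)^{2n} = (1 + X^2 + 2X)^n` read off at `X^{n-s}`, and the sum over
`s` is Vandermonde's `C(2i+2n, i+n) = ∑_σ C(2i, i+σ) C(2n, n+σ)` with `σ` and `-σ` paired up.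
-/

open Polynomial

theorem Polynomial.coeff_sum_C_mul_X_pow_pow {R α : Type*} [CommSemiring R] [Fintype α]
    (w : α → R) (e : α → ℕ) (k n : ℕ) :
    ((∑ a, C (w a) * X ^ e a) ^ k).coeff n =
      ∑ γ : Fin k → α with ∑ t, e (γ t) = n, ∏ t, w (γ t) := by
  simp only [Fintype.sum_pow, prod_mul_distrib, ← map_prod, prod_pow_eq_pow_sum,
    finsetSum_coeff, coeff_C_mul_X_pow, sum_filter, eq_comm]

theorem Polynomial.coeff_one_add_X_sq_pow {R : Type*} [CommSemiring R] (N n : ℕ) :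
    ((1 + X ^ 2 : R[X]) ^ N).coeff n = if 2 ∣ n then (N.choose (n / 2) : R) else 0 := by
  have : (1 + X ^ 2 : R[X]) ^ N = expand R 2 ((1 + X) ^ N) := by simp
  rw [this, coeff_expand two_pos, coeff_one_add_X_pow]

theorem Finset.sum_range_succ_eq_sum_range_two_mul {M : Type*} [AddCommMonoid M] (f : ℕ → M)
    (k : ℕ)     (hf : ∀ j ≤ k, ¬ 2 ∣ j → f j = 0) :
    ∑ j ∈ range (k + 1), f j = ∑ i ∈ range (k / 2 + 1), f (2 * i) := by
  rw [← sum_image (g := (2 * ·)) fun _ _ _ _ h => by simpa using h]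
  refine (sum_subset (fun j hj => ?_) fun j hj hj' =>
    hf j (by simpa [Nat.lt_succ_iff] using hj) fun ⟨i, hi⟩ => hj' ?_).symm
  · obtain ⟨i, hi, rfl⟩ := mem_image.1 hj
    simp only [mem_range] at hi ⊢
    omega
  · subst hi
    simp only [mem_range, mem_image] at hj ⊢
    exact ⟨i, by omega, rfl⟩

theorem Polynomial.coeff_two_mul_pow_one_add_X_sq_mul {R : Type*} [CommSemiring R] (a b : R)
    (k : ℕ) :
    (((1 + X ^ 2) * (C a * X + C b * (1 + X ^ 2))) ^ k).coeff (2 * k) =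
      ∑ i ∈ range (k / 2 + 1),
        (k.choose (2 * i) : R) * ((2 * k - 2 * i).choose (k - i) : R) * a ^ (2 * i) *
          b ^ (k - 2 * i) := by
  have hexpand : ((1 + X ^ 2) * (C a * X + C b * (1 + X ^ 2))) ^ k =
      ∑ j ∈ range (k + 1),
        C (a ^ j * b ^ (k - j) * k.choose j) * (X ^ j * (1 + X ^ 2) ^ (2 * k - j)) := by
    rw [mul_pow, add_pow (C a * X), mul_sum]
    refine sum_congr rfl fun j hj => ?_
    have hj : j ≤ k := Nat.lt_succ_iff.1 (mem_range.1 hj)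
    rw [show 2 * k - j = k + (k - j) by omega, pow_add]
    simp only [map_mul, map_pow, map_natCast, mul_pow]
    ring
  rw [hexpand, finsetSum_coeff, sum_range_succ_eq_sum_range_two_mul]
  · refine sum_congr rfl fun i hi => ?_
    have hi : 2 * i ≤ k := by have := mem_range.1 hi; omega
    rw [coeff_C_mul, coeff_X_pow_mul', if_pos (by omega), coeff_one_add_X_sq_pow,
      if_pos (by omega), show (2 * k - 2 * i) / 2 = k - i by omega]
    ring
  · intro j _ hj
    rw [coeff_C_mul, coeff_X_pow_mul']
    split_ifs with hle
    · rw [coeff_one_add_X_sq_pow, if_neg (by omega), mul_zero]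
    · rw [mul_zero]

theorem cpath_eq_coeff_pow (d0 d1 : ℝ) (k : ℕ) :
    cpath d0 d1 k =
      (((1 + X ^ 2) * (C (d0 / 2) * X + C (d1 / 8) * (1 + X ^ 2))) ^ k).coeff (2 * k) := by
  let S : Finset ℤ := {-2, -1, 0, 1, 2}
  have hP : (1 + X ^ 2) * (C (d0 / 2) * X + C (d1 / 8) * (1 + X ^ 2)) =
      ∑ g : S, C (Uwt d0 d1 (g : ℤ).natAbs) * X ^ ((g : ℤ) + 2).toNat :=
    calc (1 + X ^ 2) * (C (d0 / 2) * X + C (d1 / 8) * (1 + X ^ 2))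
        = C (d1 / 8) + (C (d0 / 2) * X + (C (d1 / 4) * X ^ 2 + (C (d0 / 2) * X ^ 3 +
            C (d1 / 8) * X ^ 4))) := by
          rw [show d1 / 4 = d1 / 8 + d1 / 8 by ring, C_add]
          ring
      _ = _ := by
          rw [sum_coe_sort S (fun g => C (Uwt d0 d1 g.natAbs) * X ^ (g + 2).toNat)]
          simp [S, Uwt]
  have hshift (γ : Fin k → S) :
      ∑ t, ((γ t : ℤ) + 2).toNat = 2 * k ↔ ∑ t, (γ t : ℤ) = 0 := by
    have hnonneg (t : Fin k) : 0 ≤ (γ t : ℤ) + 2 := by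
      have := (γ t).2
      simp only [S, mem_insert, mem_singleton] at this
      omega
    zify
    simp only [Int.ofNat_toNat, hnonneg, sup_of_le_left, sum_add_distrib, sum_const, card_univ,
      Fintype.card_fin, Int.nsmul_eq_mul]
    omega
  rw [hP, coeff_sum_C_mul_X_pow_pow, cpath]
  exact sum_congr (filter_congr fun γ _ => (hshift γ).symm) fun _ _ => rfl

theorem Nat.choose_two_mul_eq_sum_trinomial {n s : ℕ} (hs : s ≤ n) :
    (2 * n).choose (n + s) =
      ∑ m ∈ range ((n - s) / 2 + 1),
        2 ^ (n - s - 2 * m) * n.choose (s + 2 * m) * (s + 2 * m).choose m := by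
  have hsq : (1 + X : ℕ[X]) ^ (2 * n) = ∑ r ∈ range (n + 1),
      C (2 ^ (n - r) * n.choose r) * (X ^ (n - r) * (1 + X ^ 2) ^ r) := by
    rw [pow_mul, show (1 + X : ℕ[X]) ^ 2 = (1 + X ^ 2) + C 2 * X by rw [C_ofNat]; ring, add_pow]
    refine sum_congr rfl fun r _ => ?_
    rw [map_mul, map_pow, ← C_eq_natCast, Nat.cast_id]
    ring
  have hcoeff := congrArg (coeff · (n - s)) hsq
  simp only [coeff_one_add_X_pow, Nat.cast_id, finsetSum_coeff, coeff_C_mul,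
    coeff_X_pow_mul'] at hcoeff
  rw [Nat.choose_symm_of_eq_add (by omega : 2 * n = (n + s) + (n - s)), hcoeff,
    show n + 1 = s + (n - s + 1) by omega, sum_range_add, sum_eq_zero fun r hr => ?_, zero_add,
    sum_range_succ_eq_sum_range_two_mul]
  · refine sum_congr rfl fun m hm => ?_
    have hm : 2 * m ≤ n - s := by have := mem_range.1 hm; omega
    rw [if_pos (by omega), coeff_one_add_X_sq_pow, if_pos (by omega),
      show (n - s - (n - (s + 2 * m))) / 2 = m by omega,
      show n - (s + 2 * m) = n - s - 2 * m by omega, Nat.cast_id]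
  · intro j hj hodd
    split_ifs with hle
    · rw [coeff_one_add_X_sq_pow, if_neg (by omega), mul_zero]
    · rfl
  · rw [if_neg (by have := mem_range.1 hr; omega), mul_zero]

theorem Nat.choose_two_mul_add_two_mul_eq_sum (i n : ℕ) :
    (2 * i + 2 * n).choose (i + n) =
      ∑ s ∈ range (min i n + 1),
        (2 * i).choose (s + i) * ((2 * n).choose (n + s) * if s = 0 then 1 else 2) := by
  set u : ℕ → ℕ := fun σ => (2 * i).choose (i + σ) * (2 * n).choose (n + σ)
  have hvanish : ∀ σ ≥ min i n + 1, u σ = 0 := fun σ hσ => by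
    rcases le_total i n with h | h
    · simp only [u, Nat.choose_eq_zero_of_lt (by omega : 2 * i < i + σ), zero_mul]
    · simp only [u, Nat.choose_eq_zero_of_lt (by omega : 2 * n < n + σ), mul_zero]
  have hsplit : ∑ j ∈ range (i + 1 + n), (2 * i).choose j * (2 * n).choose (i + n - j) =
      ∑ σ ∈ range (i + 1), u σ + ∑ σ ∈ range n, u (σ + 1) := by
    rw [sum_range_add, ← sum_range_reflect]
    congr 1 <;> refine sum_congr rfl fun σ hσ => ?_ <;> have := mem_range.1 hσ
    · rw [Nat.choose_symm_of_eq_add (by omega : 2 * i = i + 1 - 1 - σ + (i + σ)),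
        show i + n - (i + 1 - 1 - σ) = n + σ by omega]
    · rw [Nat.choose_symm_of_eq_add (by omega : 2 * n = i + n - (i + 1 + σ) + (n + (σ + 1))),
        show i + 1 + σ = i + (σ + 1) by omega]
  rw [Nat.add_choose_eq, Nat.sum_antidiagonal_eq_sum_range_succ_mk,
    show (i + n).succ = i + 1 + n by omega]
  dsimp only
  rw [hsplit, eventually_constant_sum hvanish (by omega : min i n + 1 ≤ i + 1),
    eventually_constant_sum (fun σ hσ => hvanish (σ + 1) (by omega)) (by omega : min i n ≤ n),
    sum_range_succ', sum_range_succ']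
  simp only [u, Nat.succ_ne_zero, if_false, if_true, add_zero, mul_one, ← mul_assoc,
    ← sum_mul, add_comm _ i]
  ring

theorem ite_mul_choose_two_mul_eq_two_pow_mul_sum {n s : ℕ} (hs : s ≤ n) :
    (if s = 0 then 1 else 2) * ((2 * n).choose (n + s) : ℝ) =
      2 ^ n * ∑ m ∈ range ((n - s) / 2 + 1),
        (n.choose (s + 2 * m) : ℝ) * (s + 2 * m).choose m / 2 ^ (2 * m + (s - 1)) := by
  rw [Nat.choose_two_mul_eq_sum_trinomial hs]
  push_cast
  rw [mul_sum, mul_sum]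
  refine sum_congr rfl fun m hm => ?_
  have hm : 2 * m ≤ n - s := by have := mem_range.1 hm; omega
  have h2 : (2 : ℝ) ^ n =
      2 ^ (n - s - 2 * m) * ((if s = 0 then 1 else 2) * 2 ^ (2 * m + (s - 1))) := by
    rcases s with _ | s
    · simp only [if_pos, one_mul, ← pow_add]
      congr 1
      omega
    · simp [← pow_succ', ← pow_add, show n - (s + 1) - 2 * m + (2 * m + s + 1) = n by omega]
  rw [h2]
  field_simp

theorem choose_two_mul_add_two_mul_eq_two_pow_mul_sum (i n : ℕ) :
    ((2 * i + 2 * n).choose (i + n) : ℝ) =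
      2 ^ n * ∑ s ∈ range (min i n + 1), ((2 * i).choose (s + i) : ℝ) *
        ∑ m ∈ range ((n - s) / 2 + 1),
          (n.choose (s + 2 * m) : ℝ) * (s + 2 * m).choose m / 2 ^ (2 * m + (s - 1)) := by
  rw [Nat.choose_two_mul_add_two_mul_eq_sum]
  push_cast
  rw [mul_sum]
  refine sum_congr rfl fun s hs => ?_
  rw [mul_left_comm (2 ^ n : ℝ),
    ← ite_mul_choose_two_mul_eq_two_pow_mul_sum (by have := mem_range.1 hs; omega)]
  ring

theorem cpath_eq_triple_sum_general (d0 d1 : ℝ) (k : ℕ) :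
    cpath d0 d1 k =
      ∑ i ∈ Finset.range (k / 2 + 1),
        (k.choose (2 * i) : ℝ) *
          ∑ s ∈ Finset.range (min i (k - 2 * i) + 1),
            ((2 * i).choose (s + i) : ℝ) *
              ∑ m ∈ Finset.range ((k - 2 * i - s) / 2 + 1),
                ((k - 2 * i).choose (s + 2 * m) : ℝ) * ((s + 2 * m).choose m : ℝ) *
                  d0 ^ (2 * i) * d1 ^ (k - 2 * i) /
                    2 ^ (2 * k - 2 * i + 2 * m + (s - 1)) := by
  rw [cpath_eq_coeff_pow, coeff_two_mul_pow_one_add_X_sq_mul]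
  refine sum_congr rfl fun i hi => ?_
  obtain ⟨n, rfl⟩ : ∃ n, k = 2 * i + n := ⟨k - 2 * i, by have := mem_range.1 hi; omega⟩
  rw [show 2 * (2 * i + n) - 2 * i = 2 * i + 2 * n by omega, show 2 * i + n - i = i + n by omega,
    Nat.add_sub_cancel_left, choose_two_mul_add_two_mul_eq_two_pow_mul_sum, div_pow, div_pow,
    show (8 : ℝ) ^ n = 2 ^ (3 * n) by rw [pow_mul]; norm_num]
  simp only [mul_sum, sum_mul]
  refine sum_congr rfl fun s _ => sum_congr rfl fun m _ => ?_
  field_simp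
  ring

theorem cpath_eq_triple_sum (d0 d1 : ℝ) (k : ℕ) (hk : 1 ≤ k) :
    cpath d0 d1 k =
      ∑ i ∈ Finset.range (k / 2 + 1),
        (k.choose (2 * i) : ℝ) *
          ∑ s ∈ Finset.range (min i (k - 2 * i) + 1),
            ((2 * i).choose (s + i) : ℝ) *
              ∑ m ∈ Finset.range ((k - 2 * i - s) / 2 + 1),
                ((k - 2 * i).choose (s + 2 * m) : ℝ) * ((s + 2 * m).choose m : ℝ) *
                  d0 ^ (2 * i) * d1 ^ (k - 2 * i) /
                    2 ^ (2 * k - 2 * i + 2 * m + (s - 1)) :=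
  cpath_eq_triple_sum_general d0 d1 k
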